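/- For each ε ∈ {0,1}, the multiplicative submonoid { a_{12}^n : n ∈ ℕ } satisfies the left Ore condition both in D_q(Mat_2^ε) and in D'_q(Mat_2^ε). -/
import Mathlib


noncomputable section

open Matrix

/-- The ground field `k = ℂ(q^{1/2})`. -/
abbrev K : Type := RatFunc ℂ

/-- `q^{1/2}`, the generating variable of `K = ℂ(q^{1/2})`. -/
def qh : K := RatFunc.X

/-- The quantum parameter `q = (q^{1/2})^2`. -/
def qq : K := qh ^ 2

/-- The reflection equation (RE) relations for a 2×2 matrix of elements,
with `A i j` playing the role of `a_{(i+1)(j+1)}`. -/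
inductive ReRel {F : Type} [Ring F] [Algebra K F] (A : Matrix (Fin 2) (Fin 2) F) : F → F → Prop
  | r1 : ReRel A (A 0 1 * A 0 0 - A 0 0 * A 0 1) ((-((qq ^ 2)⁻¹ - 1)) • (A 0 1 * A 1 1))
  | r2 : ReRel A (A 1 1 * A 0 0) (A 0 0 * A 1 1)
  | r3 : ReRel A (A 1 0 * A 0 0 - A 0 0 * A 1 0) (((qq ^ 2)⁻¹ - 1) • (A 1 1 * A 1 0))
  | r4 : ReRel A (A 1 1 * A 0 1) ((qq ^ 2) • (A 0 1 * A 1 1))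
  | r5 : ReRel A (A 1 0 * A 0 1 - A 0 1 * A 1 0)
      ((-((qq ^ 2)⁻¹ - 1)) • (A 0 0 * A 1 1 - A 1 1 * A 1 1))
  | r6 : ReRel A (A 1 1 * A 1 0) (((qq ^ 2)⁻¹) • (A 1 0 * A 1 1))

/-- The FRT relations for a 2×2 matrix of elements,
with `B i j` playing the role of `f_{(i+1)(j+1)}`. -/
inductive FrtRel {F : Type} [Ring F] [Algebra K F] (B : Matrix (Fin 2) (Fin 2) F) : F → F → Prop
  | r1 : FrtRel B (B 0 0 * B 0 1) (qq • (B 0 1 * B 0 0))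
  | r2 : FrtRel B (B 0 0 * B 1 0) (qq⁻¹ • (B 1 0 * B 0 0))
  | r3 : FrtRel B (B 0 0 * B 1 1) (B 1 1 * B 0 0)
  | r4 : FrtRel B (B 0 1 * B 1 0 - B 1 0 * B 0 1) ((qq⁻¹ - qq) • (B 1 1 * B 0 0))
  | r5 : FrtRel B (B 0 1 * B 1 1) (qq⁻¹ • (B 1 1 * B 0 1))
  | r6 : FrtRel B (B 1 0 * B 1 1) (qq • (B 1 1 * B 1 0))

/-- The standard R-matrix of `GL_2` (rows `(q,0,0,0),(0,1,0,0),(0,q-q⁻¹,1,0),(0,0,0,q)`),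
with the tensor-square index set `Fin 2 × Fin 2` ordered as `(0,0),(0,1),(1,0),(1,1)`. -/
def Rmat : Matrix (Fin 2 × Fin 2) (Fin 2 × Fin 2) K := fun p q =>
  if p = q then (if p.1 = p.2 then qq else 1)
  else if p = ((1 : Fin 2), (0 : Fin 2)) ∧ q = ((0 : Fin 2), (1 : Fin 2)) then qq - qq⁻¹ else 0

/-- `R₂₁ = P R P`, the conjugate of the R-matrix by the flip `P` of the two tensor factors. -/
def Rmat21 : Matrix (Fin 2 × Fin 2) (Fin 2 × Fin 2) K := fun p q => Rmat (p.2, p.1) (q.2, q.1)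

/-- Generators of `D_q(Mat_2^ε)`: the entries of `A` and of `D`. -/
inductive DGen : Type | a (i j : Fin 2) | d (i j : Fin 2)

abbrev FD := FreeAlgebra K DGen

def DAmat : Matrix (Fin 2) (Fin 2) FD := fun i j => FreeAlgebra.ι K (DGen.a i j)
def DDmat : Matrix (Fin 2) (Fin 2) FD := fun i j => FreeAlgebra.ι K (DGen.d i j)

/-- Lift a scalar 4×4 matrix to a matrix over the free algebra. -/
def liftD (M : Matrix (Fin 2 × Fin 2) (Fin 2 × Fin 2) K) :
    Matrix (Fin 2 × Fin 2) (Fin 2 × Fin 2) FD := M.map (algebraMap K FD)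

/-- `D₁ = D ⊗ I₂`. -/
def D1 : Matrix (Fin 2 × Fin 2) (Fin 2 × Fin 2) FD :=
  kroneckerMap (· * ·) DDmat (1 : Matrix (Fin 2) (Fin 2) FD)

/-- `A₂ = I₂ ⊗ A`. -/
def A2 : Matrix (Fin 2 × Fin 2) (Fin 2 × Fin 2) FD :=
  kroneckerMap (· * ·) (1 : Matrix (Fin 2) (Fin 2) FD) DAmat

/-- The defining relations of `D_q(Mat_2^ε)`: RE relations for `A`, RE relations for `D`,
and the cross relations `R₂₁ D₁ R A₂ = q^ε A₂ R₂₁ D₁ R₂₁⁻¹`. -/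
inductive DqRel (ε : ℕ) : FD → FD → Prop
  | ra {x y : FD} : ReRel DAmat x y → DqRel ε x y
  | rd {x y : FD} : ReRel DDmat x y → DqRel ε x y
  | cross (p q : Fin 2 × Fin 2) :
      DqRel ε ((liftD Rmat21 * D1 * liftD Rmat * A2) p q)
        ((qq ^ ε) • ((A2 * liftD Rmat21 * D1 * liftD Rmat21⁻¹) p q))

/-- The algebra `D_q(Mat_2^ε)` of q-difference operators on 2×2 matrices. -/
abbrev DqM2 (ε : ℕ) := RingQuot (DqRel ε)

/-- The generator `a_{(i+1)(j+1)}` of `D_q(Mat_2^ε)`. -/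
def da (ε : ℕ) (i j : Fin 2) : DqM2 ε := RingQuot.mkAlgHom K (DqRel ε) (DAmat i j)

/-- The generator `∂_{(i+1)(j+1)}` of `D_q(Mat_2^ε)`. -/
def dd (ε : ℕ) (i j : Fin 2) : DqM2 ε := RingQuot.mkAlgHom K (DqRel ε) (DDmat i j)

/-- `det_q(A) = a₁₁a₂₂ - q² a₁₂a₂₁` in `D_q(Mat_2^ε)`. -/
def detA (ε : ℕ) : DqM2 ε := da ε 0 0 * da ε 1 1 - (qq ^ 2) • (da ε 0 1 * da ε 1 0)

/-- `det_q(D) = ∂₁₁∂₂₂ - q² ∂₁₂∂₂₁` in `D_q(Mat_2^ε)`. -/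
def detD (ε : ℕ) : DqM2 ε := dd ε 0 0 * dd ε 1 1 - (qq ^ 2) • (dd ε 0 1 * dd ε 1 0)

/-- Generators of `D'_q(Mat_2^ε)`: the entries of `A` and of `F`. -/
inductive PGen : Type | a (i j : Fin 2) | f (i j : Fin 2)

abbrev FP := FreeAlgebra K PGen

def PAmat : Matrix (Fin 2) (Fin 2) FP := fun i j => FreeAlgebra.ι K (PGen.a i j)
def PFmat : Matrix (Fin 2) (Fin 2) FP := fun i j => FreeAlgebra.ι K (PGen.f i j)

/-- Lift a scalar 4×4 matrix to a matrix over the free algebra. -/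
def liftP (M : Matrix (Fin 2 × Fin 2) (Fin 2 × Fin 2) K) :
    Matrix (Fin 2 × Fin 2) (Fin 2 × Fin 2) FP := M.map (algebraMap K FP)

/-- `A₁ = A ⊗ I₂`. -/
def PA1 : Matrix (Fin 2 × Fin 2) (Fin 2 × Fin 2) FP :=
  kroneckerMap (· * ·) PAmat (1 : Matrix (Fin 2) (Fin 2) FP)

/-- `F₂ = I₂ ⊗ F`. -/
def PF2 : Matrix (Fin 2 × Fin 2) (Fin 2 × Fin 2) FP :=
  kroneckerMap (· * ·) (1 : Matrix (Fin 2) (Fin 2) FP) PFmat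

/-- The defining relations of `D'_q(Mat_2^ε)`: RE relations for `A`, FRT relations for `F`,
and the cross relations `F₂ A₁ = q^{-ε} R₂₁ A₁ R F₂`. -/
inductive DpRel (ε : ℕ) : FP → FP → Prop
  | ra {x y : FP} : ReRel PAmat x y → DpRel ε x y
  | rf {x y : FP} : FrtRel PFmat x y → DpRel ε x y
  | cross (p q : Fin 2 × Fin 2) :
      DpRel ε ((PF2 * PA1) p q)
        ((qq⁻¹ ^ ε) • ((liftP Rmat21 * PA1 * liftP Rmat * PF2) p q))

/-- The algebra `D'_q(Mat_2^ε)`. -/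
abbrev DpM2 (ε : ℕ) := RingQuot (DpRel ε)

/-- The generator `a_{(i+1)(j+1)}` of `D'_q(Mat_2^ε)`. -/
def pa (ε : ℕ) (i j : Fin 2) : DpM2 ε := RingQuot.mkAlgHom K (DpRel ε) (PAmat i j)

/-- The generator `f_{(i+1)(j+1)}` of `D'_q(Mat_2^ε)`. -/
def pf (ε : ℕ) (i j : Fin 2) : DpM2 ε := RingQuot.mkAlgHom K (DpRel ε) (PFmat i j)

/-- `det_q(A) = a₁₁a₂₂ - q² a₁₂a₂₁` in `D'_q(Mat_2^ε)`. -/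
def detAp (ε : ℕ) : DpM2 ε := pa ε 0 0 * pa ε 1 1 - (qq ^ 2) • (pa ε 0 1 * pa ε 1 0)

/-- `det_q(F) = f₁₁f₂₂ - q f₁₂f₂₁` in `D'_q(Mat_2^ε)`. -/
def detF (ε : ℕ) : DpM2 ε := pf ε 0 0 * pf ε 1 1 - qq • (pf ε 0 1 * pf ε 1 0)

/-- A subset `S` of a ring `B` satisfies the left Ore condition if for every `s ∈ S` and
every `b ∈ B` there are `s' ∈ S` and `b' ∈ B` with `s' * b = b' * s`. -/
def LeftOreCond {B : Type} [Ring B] (S : Set B) : Prop :=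
  ∀ s ∈ S, ∀ b : B, ∃ s' ∈ S, ∃ b' : B, s' * b = b' * s

section Abstract
variable {B : Type} [Ring B] [Algebra K B]

theorem ore_of_adjoin (a : B) (G gens : Set B)
    (htop : Algebra.adjoin K gens = ⊤)
    (ha : a ∈ Algebra.adjoin K G)
    (hcomm : ∀ g ∈ G, ∃ u ∈ Algebra.adjoin K G, a * g = u * a)
    (hcross : ∀ g ∈ gens, a * g ∈ Algebra.adjoin K G) :
    LeftOreCond ((Submonoid.powers a : Submonoid B) : Set B) := by
  set U := Algebra.adjoin K G with hUdef
  -- a * u = u' * a for all u in U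
  have key : ∀ u ∈ U, ∃ u' ∈ U, a * u = u' * a := by
    intro u hu
    induction hu using Algebra.adjoin_induction with
    | mem g hg => exact hcomm g hg
    | algebraMap r =>
        exact ⟨algebraMap K B r, Subalgebra.algebraMap_mem _ r,
          (Algebra.commutes r a).symm⟩
    | add x y hx hy ihx ihy =>
        obtain ⟨x', hx', hxe⟩ := ihx
        obtain ⟨y', hy', hye⟩ := ihy
        exact ⟨x' + y', add_mem hx' hy', by rw [mul_add, hxe, hye, add_mul]⟩
    | mul x y hx hy ihx ihy =>
        obtain ⟨x', hx', hxe⟩ := ihx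
        obtain ⟨y', hy', hye⟩ := ihy
        exact ⟨x' * y', mul_mem hx' hy', by
          rw [← mul_assoc, hxe, mul_assoc, hye, ← mul_assoc]⟩
  have keypow : ∀ n : ℕ, ∀ u ∈ U, ∃ u' ∈ U, a ^ n * u = u' * a ^ n := by
    intro n
    induction n with
    | zero => intro u hu; exact ⟨u, hu, by simp⟩
    | succ n ih =>
        intro u hu
        obtain ⟨u', hu', he⟩ := key u hu
        obtain ⟨u'', hu'', he'⟩ := ih u' hu'
        exact ⟨u'', hu'', by
          rw [pow_succ, mul_assoc, he, ← mul_assoc, he', mul_assoc]⟩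
  -- raising: a * u ∈ U for u ∈ U
  have step : ∀ u ∈ U, a * u ∈ U := by
    intro u hu
    obtain ⟨u', hu', he⟩ := key u hu
    rw [he]; exact mul_mem hu' ha
  -- main: every b is pushed into U by a power
  have main : ∀ b : B, ∃ m : ℕ, a ^ m * b ∈ U := by
    have hb : ∀ b : B, b ∈ Algebra.adjoin K gens := by
      intro b; rw [htop]; trivial
    have mono : ∀ b : B, ∀ m, a ^ m * b ∈ U → a ^ (m+1) * b ∈ U := by
      intro b m h
      rw [pow_succ', mul_assoc]
      exact step _ h
    have mono' : ∀ b : B, ∀ m m', m ≤ m' → a ^ m * b ∈ U → a ^ m' * b ∈ U := by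
      intro b m m' hle h
      induction hle with
      | refl => exact h
      | step h' ih => exact mono b _ ih
    intro b
    induction hb b using Algebra.adjoin_induction with
    | mem g hg => exact ⟨1, by simpa using hcross g hg⟩
    | algebraMap r => exact ⟨0, by simpa using Subalgebra.algebraMap_mem _ r⟩
    | add x y hx hy ihx ihy =>
        obtain ⟨mx, hmx⟩ := ihx
        obtain ⟨my, hmy⟩ := ihy
        refine ⟨max mx my, ?_⟩
        rw [mul_add]
        exact add_mem (mono' x mx _ (le_max_left _ _) hmx)
          (mono' y my _ (le_max_right _ _) hmy)
    | mul x y hx hy ihx ihy =>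
        obtain ⟨mx, hmx⟩ := ihx
        obtain ⟨my, hmy⟩ := ihy
        refine ⟨my + mx, ?_⟩
        obtain ⟨u', hu', he⟩ := keypow my _ hmx
        have : a ^ (my + mx) * (x * y) = u' * (a ^ my * y) := by
          rw [pow_add, mul_assoc, ← mul_assoc (a ^ mx), ← mul_assoc (a^my), ← mul_assoc (a^my)]
          rw [← mul_assoc] at he ⊢
          rw [he]
        rw [this]
        exact mul_mem hu' hmy
  -- conclude Ore
  rintro s ⟨n, rfl⟩ b
  obtain ⟨m, hm⟩ := main b
  obtain ⟨u', hu', he⟩ := keypow n _ hm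
  refine ⟨a ^ (n + m), ⟨n + m, rfl⟩, u', ?_⟩
  show a ^ (n + m) * b = u' * a ^ n
  rw [pow_add, mul_assoc, he]

end Abstract
theorem adjoin_top_quot {X : Type} (r : FreeAlgebra K X → FreeAlgebra K X → Prop) :
    Algebra.adjoin K (Set.range fun g : X => RingQuot.mkAlgHom K r (FreeAlgebra.ι K g)) = ⊤ := by
  have h1 : (Set.range fun g : X => RingQuot.mkAlgHom K r (FreeAlgebra.ι K g)) =
      RingQuot.mkAlgHom K r '' Set.range (FreeAlgebra.ι K) := by
    rw [← Set.range_comp]; rfl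
  rw [h1, ← AlgHom.map_adjoin, FreeAlgebra.adjoin_range_ι, Algebra.map_top,
    AlgHom.range_eq_top (f := RingQuot.mkAlgHom K r) |>.mpr (RingQuot.mkAlgHom_surjective K r)]
lemma qq_ne_zero : (qq : K) ≠ 0 := pow_ne_zero 2 RatFunc.X_ne_zero

lemma qq_pow_ne_one {n : ℕ} (hn : n ≠ 0) : (qq : K) ^ n ≠ 1 := by
  intro h
  have : (RatFunc.X : K) ^ (2 * n) = 1 := by
    rw [pow_mul]; exact h
  rw [← RatFunc.algebraMap_X, ← map_pow, ← map_one (algebraMap (Polynomial ℂ) K)] at this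
  have := RatFunc.algebraMap_injective ℂ this
  have hdeg := congrArg Polynomial.natDegree this
  simp [Polynomial.natDegree_X_pow] at hdeg
  omega

lemma qq_sq_ne_one : (qq : K) ^ 2 ≠ 1 := qq_pow_ne_one (by norm_num)

lemma qq_sub_inv_ne : (qq : K) - qq⁻¹ ≠ 0 := by
  intro h
  apply qq_sq_ne_one
  have h2 : (qq - qq⁻¹) * qq = 0 := by rw [h, zero_mul]
  rw [sub_mul, inv_mul_cancel₀ qq_ne_zero] at h2
  linear_combination h2

lemma qq_inv_sub_ne : (qq : K)⁻¹ - qq ≠ 0 := by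
  intro h
  apply qq_sub_inv_ne
  linear_combination -h

lemma one_sub_qq_sq_ne : (1 : K) - qq ^ 2 ≠ 0 := by
  intro h
  exact qq_sq_ne_one (by linear_combination -h)

lemma qq_pow_ne_zero (n : ℕ) : (qq : K) ^ n ≠ 0 := pow_ne_zero n qq_ne_zero
lemma qq_sq_ne_zero : (qq : K) ^ 2 ≠ 0 := pow_ne_zero 2 qq_ne_zero
/-- Explicit inverse of `Rmat21`. -/
def Rinv21 : Matrix (Fin 2 × Fin 2) (Fin 2 × Fin 2) K := fun p q =>
  if p = q then (if p.1 = p.2 then qq⁻¹ else 1)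
  else if p = ((0 : Fin 2), (1 : Fin 2)) ∧ q = ((1 : Fin 2), (0 : Fin 2)) then qq⁻¹ - qq else 0

lemma Rinv21_mul : Rinv21 * Rmat21 = 1 := by
  ext ⟨i, j⟩ ⟨k, l⟩
  fin_cases i <;> fin_cases j <;> fin_cases k <;> fin_cases l <;>
    simp (config := { decide := true }) [Matrix.mul_apply, Fintype.sum_prod_type,
      Fin.sum_univ_two, Rmat, Rmat21, Rinv21, Matrix.one_apply, Prod.mk.injEq] <;>
    field_simp <;> exact div_self qq_ne_zero

lemma Rmat21_inv_eq : Rmat21⁻¹ = Rinv21 := Matrix.inv_eq_left_inv Rinv21_mul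
section DEntries

lemma Dlhs_a : (liftD Rmat21 * D1 * liftD Rmat * A2) ((0:Fin 2),(0:Fin 2)) ((1:Fin 2),(1:Fin 2))
    = qq • (DDmat 0 1 * DAmat 0 1) := by
  simp (config := { decide := true }) [liftD, D1, A2, Rmat, Rmat21, Rinv21, Matrix.mul_apply,
    Fintype.sum_prod_type, Fin.sum_univ_two, Matrix.kroneckerMap_apply, Matrix.one_apply,
    Matrix.map_apply, Prod.mk.injEq]
  try (simp only [← Algebra.commutes, ← Algebra.smul_def, mul_smul_comm, smul_mul_assoc,
    smul_smul, mul_sub, sub_mul, smul_sub])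
  try (simp only [sub_smul, one_smul, smul_sub, mul_inv_cancel₀ qq_ne_zero,
    inv_mul_cancel₀ qq_ne_zero, ← pow_two])
  try abel

lemma Drhs_a : (A2 * liftD Rmat21 * D1 * liftD Rmat21⁻¹) ((0:Fin 2),(0:Fin 2)) ((1:Fin 2),(1:Fin 2))
    = qq⁻¹ • (DAmat 0 1 * DDmat 0 1) := by
  rw [Rmat21_inv_eq]
  simp (config := { decide := true }) [liftD, D1, A2, Rmat, Rmat21, Rinv21, Matrix.mul_apply,
    Fintype.sum_prod_type, Fin.sum_univ_two, Matrix.kroneckerMap_apply, Matrix.one_apply,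
    Matrix.map_apply, Prod.mk.injEq]
  try (simp only [← Algebra.commutes, ← Algebra.smul_def, mul_smul_comm, smul_mul_assoc,
    smul_smul, mul_sub, sub_mul, smul_sub])
  try (simp only [sub_smul, one_smul, smul_sub, mul_inv_cancel₀ qq_ne_zero,
    inv_mul_cancel₀ qq_ne_zero, ← pow_two])
  try abel

lemma Dlhs_b : (liftD Rmat21 * D1 * liftD Rmat * A2) ((1:Fin 2),(0:Fin 2)) ((1:Fin 2),(1:Fin 2))
    = DDmat 1 1 * DAmat 0 1 := by
  simp (config := { decide := true }) [liftD, D1, A2, Rmat, Rmat21, Rinv21, Matrix.mul_apply,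
    Fintype.sum_prod_type, Fin.sum_univ_two, Matrix.kroneckerMap_apply, Matrix.one_apply,
    Matrix.map_apply, Prod.mk.injEq]
  try (simp only [← Algebra.commutes, ← Algebra.smul_def, mul_smul_comm, smul_mul_assoc,
    smul_smul, mul_sub, sub_mul, smul_sub])
  try (simp only [sub_smul, one_smul, smul_sub, mul_inv_cancel₀ qq_ne_zero,
    inv_mul_cancel₀ qq_ne_zero, ← pow_two])
  try abel

lemma Drhs_b : (A2 * liftD Rmat21 * D1 * liftD Rmat21⁻¹) ((1:Fin 2),(0:Fin 2)) ((1:Fin 2),(1:Fin 2))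
    = DAmat 0 1 * DDmat 1 1 := by
  rw [Rmat21_inv_eq]
  simp (config := { decide := true }) [liftD, D1, A2, Rmat, Rmat21, Rinv21, Matrix.mul_apply,
    Fintype.sum_prod_type, Fin.sum_univ_two, Matrix.kroneckerMap_apply, Matrix.one_apply,
    Matrix.map_apply, Prod.mk.injEq]
  try (simp only [← Algebra.commutes, ← Algebra.smul_def, mul_smul_comm, smul_mul_assoc,
    smul_smul, mul_sub, sub_mul, smul_sub])
  try (simp only [sub_smul, one_smul, smul_sub, mul_inv_cancel₀ qq_ne_zero,
    inv_mul_cancel₀ qq_ne_zero, ← pow_two])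
  try abel

lemma Dlhs_c : (liftD Rmat21 * D1 * liftD Rmat * A2) ((0:Fin 2),(0:Fin 2)) ((1:Fin 2),(0:Fin 2))
    = qq • (DDmat 0 1 * DAmat 0 0) := by
  simp (config := { decide := true }) [liftD, D1, A2, Rmat, Rmat21, Rinv21, Matrix.mul_apply,
    Fintype.sum_prod_type, Fin.sum_univ_two, Matrix.kroneckerMap_apply, Matrix.one_apply,
    Matrix.map_apply, Prod.mk.injEq]
  try (simp only [← Algebra.commutes, ← Algebra.smul_def, mul_smul_comm, smul_mul_assoc,
    smul_smul, mul_sub, sub_mul, smul_sub])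
  try (simp only [sub_smul, one_smul, smul_sub, mul_inv_cancel₀ qq_ne_zero,
    inv_mul_cancel₀ qq_ne_zero, ← pow_two])
  try abel

lemma Drhs_c : (A2 * liftD Rmat21 * D1 * liftD Rmat21⁻¹) ((0:Fin 2),(0:Fin 2)) ((1:Fin 2),(0:Fin 2))
    = qq • (DAmat 0 0 * DDmat 0 1) + (qq⁻¹ - qq) • (DAmat 0 1 * DDmat 0 0) + (qq - qq⁻¹) • (DAmat 0 1 * DDmat 1 1) := by
  rw [Rmat21_inv_eq]
  simp (config := { decide := true }) [liftD, D1, A2, Rmat, Rmat21, Rinv21, Matrix.mul_apply,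
    Fintype.sum_prod_type, Fin.sum_univ_two, Matrix.kroneckerMap_apply, Matrix.one_apply,
    Matrix.map_apply, Prod.mk.injEq]
  try (simp only [← Algebra.commutes, ← Algebra.smul_def, mul_smul_comm, smul_mul_assoc,
    smul_smul, mul_sub, sub_mul, smul_sub])
  try (simp only [sub_smul, one_smul, smul_sub, mul_inv_cancel₀ qq_ne_zero,
    inv_mul_cancel₀ qq_ne_zero, ← pow_two])
  try abel

lemma Dlhs_d : (liftD Rmat21 * D1 * liftD Rmat * A2) ((1:Fin 2),(0:Fin 2)) ((1:Fin 2),(0:Fin 2))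
    = DDmat 1 1 * DAmat 0 0 := by
  simp (config := { decide := true }) [liftD, D1, A2, Rmat, Rmat21, Rinv21, Matrix.mul_apply,
    Fintype.sum_prod_type, Fin.sum_univ_two, Matrix.kroneckerMap_apply, Matrix.one_apply,
    Matrix.map_apply, Prod.mk.injEq]
  try (simp only [← Algebra.commutes, ← Algebra.smul_def, mul_smul_comm, smul_mul_assoc,
    smul_smul, mul_sub, sub_mul, smul_sub])
  try (simp only [sub_smul, one_smul, smul_sub, mul_inv_cancel₀ qq_ne_zero,
    inv_mul_cancel₀ qq_ne_zero, ← pow_two])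
  try abel

lemma Drhs_d : (A2 * liftD Rmat21 * D1 * liftD Rmat21⁻¹) ((1:Fin 2),(0:Fin 2)) ((1:Fin 2),(0:Fin 2))
    = DAmat 0 0 * DDmat 1 1 + (1 - qq^2) • (DAmat 0 1 * DDmat 1 0) := by
  rw [Rmat21_inv_eq]
  simp (config := { decide := true }) [liftD, D1, A2, Rmat, Rmat21, Rinv21, Matrix.mul_apply,
    Fintype.sum_prod_type, Fin.sum_univ_two, Matrix.kroneckerMap_apply, Matrix.one_apply,
    Matrix.map_apply, Prod.mk.injEq]
  try (simp only [← Algebra.commutes, ← Algebra.smul_def, mul_smul_comm, smul_mul_assoc,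
    smul_smul, mul_sub, sub_mul, smul_sub])
  try (simp only [sub_smul, one_smul, smul_sub, mul_inv_cancel₀ qq_ne_zero,
    inv_mul_cancel₀ qq_ne_zero, ← pow_two])
  try abel

end DEntries
section PEntries

lemma Plhs_1 : (PF2 * PA1) ((0:Fin 2),(0:Fin 2)) ((1:Fin 2),(0:Fin 2))
    = PFmat 0 0 * PAmat 0 1 := by
  simp (config := { decide := true }) [liftP, PA1, PF2, Rmat, Rmat21, Matrix.mul_apply,
    Fintype.sum_prod_type, Fin.sum_univ_two, Matrix.kroneckerMap_apply, Matrix.one_apply,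
    Matrix.map_apply, Prod.mk.injEq]
  try (simp only [← Algebra.commutes, ← Algebra.smul_def, mul_smul_comm, smul_mul_assoc,
    smul_smul, mul_sub, sub_mul, smul_sub])
  try (simp only [sub_smul, one_smul, smul_sub, mul_inv_cancel₀ qq_ne_zero,
    inv_mul_cancel₀ qq_ne_zero, ← pow_two])
  try abel

lemma Prhs_1 : (liftP Rmat21 * PA1 * liftP Rmat * PF2) ((0:Fin 2),(0:Fin 2)) ((1:Fin 2),(0:Fin 2))
    = qq • (PAmat 0 1 * PFmat 0 0) := by
  simp (config := { decide := true }) [liftP, PA1, PF2, Rmat, Rmat21, Matrix.mul_apply,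
    Fintype.sum_prod_type, Fin.sum_univ_two, Matrix.kroneckerMap_apply, Matrix.one_apply,
    Matrix.map_apply, Prod.mk.injEq]
  try (simp only [← Algebra.commutes, ← Algebra.smul_def, mul_smul_comm, smul_mul_assoc,
    smul_smul, mul_sub, sub_mul, smul_sub])
  try (simp only [sub_smul, one_smul, smul_sub, mul_inv_cancel₀ qq_ne_zero,
    inv_mul_cancel₀ qq_ne_zero, ← pow_two])
  try abel

lemma Plhs_2 : (PF2 * PA1) ((0:Fin 2),(0:Fin 2)) ((1:Fin 2),(1:Fin 2))
    = PFmat 0 1 * PAmat 0 1 := by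
  simp (config := { decide := true }) [liftP, PA1, PF2, Rmat, Rmat21, Matrix.mul_apply,
    Fintype.sum_prod_type, Fin.sum_univ_two, Matrix.kroneckerMap_apply, Matrix.one_apply,
    Matrix.map_apply, Prod.mk.injEq]
  try (simp only [← Algebra.commutes, ← Algebra.smul_def, mul_smul_comm, smul_mul_assoc,
    smul_smul, mul_sub, sub_mul, smul_sub])
  try (simp only [sub_smul, one_smul, smul_sub, mul_inv_cancel₀ qq_ne_zero,
    inv_mul_cancel₀ qq_ne_zero, ← pow_two])
  try abel

lemma Prhs_2 : (liftP Rmat21 * PA1 * liftP Rmat * PF2) ((0:Fin 2),(0:Fin 2)) ((1:Fin 2),(1:Fin 2))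
    = qq • (PAmat 0 1 * PFmat 0 1) := by
  simp (config := { decide := true }) [liftP, PA1, PF2, Rmat, Rmat21, Matrix.mul_apply,
    Fintype.sum_prod_type, Fin.sum_univ_two, Matrix.kroneckerMap_apply, Matrix.one_apply,
    Matrix.map_apply, Prod.mk.injEq]
  try (simp only [← Algebra.commutes, ← Algebra.smul_def, mul_smul_comm, smul_mul_assoc,
    smul_smul, mul_sub, sub_mul, smul_sub])
  try (simp only [sub_smul, one_smul, smul_sub, mul_inv_cancel₀ qq_ne_zero,
    inv_mul_cancel₀ qq_ne_zero, ← pow_two])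
  try abel

lemma Plhs_3 : (PF2 * PA1) ((0:Fin 2),(1:Fin 2)) ((1:Fin 2),(0:Fin 2))
    = PFmat 1 0 * PAmat 0 1 := by
  simp (config := { decide := true }) [liftP, PA1, PF2, Rmat, Rmat21, Matrix.mul_apply,
    Fintype.sum_prod_type, Fin.sum_univ_two, Matrix.kroneckerMap_apply, Matrix.one_apply,
    Matrix.map_apply, Prod.mk.injEq]
  try (simp only [← Algebra.commutes, ← Algebra.smul_def, mul_smul_comm, smul_mul_assoc,
    smul_smul, mul_sub, sub_mul, smul_sub])
  try (simp only [sub_smul, one_smul, smul_sub, mul_inv_cancel₀ qq_ne_zero,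
    inv_mul_cancel₀ qq_ne_zero, ← pow_two])
  try abel

lemma Prhs_3 : (liftP Rmat21 * PA1 * liftP Rmat * PF2) ((0:Fin 2),(1:Fin 2)) ((1:Fin 2),(0:Fin 2))
    = qq • (PAmat 0 1 * PFmat 1 0) + (qq - qq⁻¹) • (PAmat 1 1 * PFmat 0 0) := by
  simp (config := { decide := true }) [liftP, PA1, PF2, Rmat, Rmat21, Matrix.mul_apply,
    Fintype.sum_prod_type, Fin.sum_univ_two, Matrix.kroneckerMap_apply, Matrix.one_apply,
    Matrix.map_apply, Prod.mk.injEq]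
  try (simp only [← Algebra.commutes, ← Algebra.smul_def, mul_smul_comm, smul_mul_assoc,
    smul_smul, mul_sub, sub_mul, smul_sub])
  try (simp only [sub_smul, one_smul, smul_sub, mul_inv_cancel₀ qq_ne_zero,
    inv_mul_cancel₀ qq_ne_zero, ← pow_two])
  try abel

lemma Plhs_4 : (PF2 * PA1) ((0:Fin 2),(1:Fin 2)) ((1:Fin 2),(1:Fin 2))
    = PFmat 1 1 * PAmat 0 1 := by
  simp (config := { decide := true }) [liftP, PA1, PF2, Rmat, Rmat21, Matrix.mul_apply,
    Fintype.sum_prod_type, Fin.sum_univ_two, Matrix.kroneckerMap_apply, Matrix.one_apply,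
    Matrix.map_apply, Prod.mk.injEq]
  try (simp only [← Algebra.commutes, ← Algebra.smul_def, mul_smul_comm, smul_mul_assoc,
    smul_smul, mul_sub, sub_mul, smul_sub])
  try (simp only [sub_smul, one_smul, smul_sub, mul_inv_cancel₀ qq_ne_zero,
    inv_mul_cancel₀ qq_ne_zero, ← pow_two])
  try abel

lemma Prhs_4 : (liftP Rmat21 * PA1 * liftP Rmat * PF2) ((0:Fin 2),(1:Fin 2)) ((1:Fin 2),(1:Fin 2))
    = qq • (PAmat 0 1 * PFmat 1 1) + (qq - qq⁻¹) • (PAmat 1 1 * PFmat 0 1) := by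
  simp (config := { decide := true }) [liftP, PA1, PF2, Rmat, Rmat21, Matrix.mul_apply,
    Fintype.sum_prod_type, Fin.sum_univ_two, Matrix.kroneckerMap_apply, Matrix.one_apply,
    Matrix.map_apply, Prod.mk.injEq]
  try (simp only [← Algebra.commutes, ← Algebra.smul_def, mul_smul_comm, smul_mul_assoc,
    smul_smul, mul_sub, sub_mul, smul_sub])
  try (simp only [sub_smul, one_smul, smul_sub, mul_inv_cancel₀ qq_ne_zero,
    inv_mul_cancel₀ qq_ne_zero, ← pow_two])
  try abel

end PEntries
section DRels
variable (ε : ℕ)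

lemma qrel1 : da ε 0 1 * da ε 0 0 - da ε 0 0 * da ε 0 1
    = (-((qq ^ 2)⁻¹ - 1)) • (da ε 0 1 * da ε 1 1) := by
  simpa [da, map_sub, _root_.map_mul, _root_.map_smul] using
    RingQuot.mkAlgHom_rel K (DqRel.ra (ε := ε) ReRel.r1)

lemma qrel4 : da ε 1 1 * da ε 0 1 = (qq ^ 2) • (da ε 0 1 * da ε 1 1) := by
  simpa [da, _root_.map_mul, _root_.map_smul] using
    RingQuot.mkAlgHom_rel K (DqRel.ra (ε := ε) ReRel.r4)

lemma qrel5 : da ε 1 0 * da ε 0 1 - da ε 0 1 * da ε 1 0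
    = (-((qq ^ 2)⁻¹ - 1)) • (da ε 0 0 * da ε 1 1 - da ε 1 1 * da ε 1 1) := by
  simpa [da, map_sub, _root_.map_mul, _root_.map_smul] using
    RingQuot.mkAlgHom_rel K (DqRel.ra (ε := ε) ReRel.r5)

lemma DL1 : da ε 0 1 * da ε 1 1 = (qq ^ 2)⁻¹ • (da ε 1 1 * da ε 0 1) := by
  rw [qrel4, smul_smul, inv_mul_cancel₀ qq_sq_ne_zero, one_smul]

lemma DL2 : da ε 0 1 * da ε 0 0
    = (da ε 0 0 + (-((qq ^ 2)⁻¹ - 1) * (qq ^ 2)⁻¹) • da ε 1 1) * da ε 0 1 := by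
  have h3 : da ε 0 1 * da ε 0 0
      = da ε 0 0 * da ε 0 1 + (-((qq ^ 2)⁻¹ - 1)) • (da ε 0 1 * da ε 1 1) := by
    rw [← qrel1]; abel
  rw [DL1, smul_smul] at h3
  rw [h3, add_mul, smul_mul_assoc]

lemma DL3 : da ε 0 1 * da ε 1 0 = da ε 1 0 * da ε 0 1
    - (-((qq ^ 2)⁻¹ - 1)) • (da ε 0 0 * da ε 1 1 - da ε 1 1 * da ε 1 1) := by
  rw [← qrel5]; abel

lemma cross_a : qq • (dd ε 0 1 * da ε 0 1) = (qq ^ ε) • (qq⁻¹ • (da ε 0 1 * dd ε 0 1)) := by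
  have h := RingQuot.mkAlgHom_rel K
    (DqRel.cross (ε := ε) ((0:Fin 2),(0:Fin 2)) ((1:Fin 2),(1:Fin 2)))
  rw [Dlhs_a, Drhs_a] at h
  simpa [da, dd, _root_.map_mul, _root_.map_smul] using h

lemma cross_b : dd ε 1 1 * da ε 0 1 = (qq ^ ε) • (da ε 0 1 * dd ε 1 1) := by
  have h := RingQuot.mkAlgHom_rel K
    (DqRel.cross (ε := ε) ((1:Fin 2),(0:Fin 2)) ((1:Fin 2),(1:Fin 2)))
  rw [Dlhs_b, Drhs_b] at h
  simpa [da, dd, _root_.map_mul, _root_.map_smul] using h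

lemma cross_c : qq • (dd ε 0 1 * da ε 0 0)
    = (qq ^ ε) • (qq • (da ε 0 0 * dd ε 0 1) + (qq⁻¹ - qq) • (da ε 0 1 * dd ε 0 0)
      + (qq - qq⁻¹) • (da ε 0 1 * dd ε 1 1)) := by
  have h := RingQuot.mkAlgHom_rel K
    (DqRel.cross (ε := ε) ((0:Fin 2),(0:Fin 2)) ((1:Fin 2),(0:Fin 2)))
  rw [Dlhs_c, Drhs_c] at h
  simpa [da, dd, _root_.map_mul, _root_.map_smul, map_add] using h

lemma cross_d : dd ε 1 1 * da ε 0 0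
    = (qq ^ ε) • (da ε 0 0 * dd ε 1 1 + (1 - qq ^ 2) • (da ε 0 1 * dd ε 1 0)) := by
  have h := RingQuot.mkAlgHom_rel K
    (DqRel.cross (ε := ε) ((1:Fin 2),(0:Fin 2)) ((1:Fin 2),(0:Fin 2)))
  rw [Dlhs_d, Drhs_d] at h
  simpa [da, dd, _root_.map_mul, _root_.map_smul, map_add] using h

lemma qq_pow_mul_inv_ne : (qq : K) ^ ε * qq⁻¹ ≠ 0 :=
  mul_ne_zero (qq_pow_ne_zero ε) (inv_ne_zero qq_ne_zero)

lemma DL4 : da ε 0 1 * dd ε 0 1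
    = ((qq ^ ε * qq⁻¹)⁻¹ * qq) • (dd ε 0 1 * da ε 0 1) := by
  have h := cross_a ε
  rw [smul_smul] at h
  have h2 := congrArg (fun z => (qq ^ ε * qq⁻¹)⁻¹ • z) h.symm
  simp only [smul_smul] at h2
  rw [inv_mul_cancel₀ (qq_pow_mul_inv_ne ε), one_smul] at h2
  exact h2

lemma DL5 : da ε 0 1 * dd ε 1 1 = (qq ^ ε)⁻¹ • (dd ε 1 1 * da ε 0 1) := by
  have h2 := congrArg (fun z => (qq ^ ε : K)⁻¹ • z) (cross_b ε)
  simp only [smul_smul] at h2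
  rw [inv_mul_cancel₀ (qq_pow_ne_zero ε), one_smul] at h2
  exact h2.symm

lemma DL6 : (qq ^ ε * (qq⁻¹ - qq)) • (da ε 0 1 * dd ε 0 0)
    = qq • (dd ε 0 1 * da ε 0 0) - (qq ^ ε * qq) • (da ε 0 0 * dd ε 0 1)
      - (qq ^ ε * (qq - qq⁻¹) * (qq ^ ε)⁻¹) • (dd ε 1 1 * da ε 0 1) := by
  rw [cross_c ε, DL5 ε, smul_add, smul_add, smul_smul, smul_smul, smul_smul, smul_smul]
  abel

lemma DL6' : da ε 0 1 * dd ε 0 0 = (qq ^ ε * (qq⁻¹ - qq))⁻¹ •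
    (qq • (dd ε 0 1 * da ε 0 0) - (qq ^ ε * qq) • (da ε 0 0 * dd ε 0 1)
      - (qq ^ ε * (qq - qq⁻¹) * (qq ^ ε)⁻¹) • (dd ε 1 1 * da ε 0 1)) := by
  have hne : (qq : K) ^ ε * (qq⁻¹ - qq) ≠ 0 := mul_ne_zero (qq_pow_ne_zero ε) qq_inv_sub_ne
  rw [← DL6 ε, smul_smul, inv_mul_cancel₀ hne, one_smul]

lemma DL7 : (qq ^ ε * (1 - qq ^ 2)) • (da ε 0 1 * dd ε 1 0)
    = dd ε 1 1 * da ε 0 0 - (qq ^ ε) • (da ε 0 0 * dd ε 1 1) := by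
  rw [cross_d ε, smul_add, smul_smul]
  abel

lemma DL7' : da ε 0 1 * dd ε 1 0 = (qq ^ ε * (1 - qq ^ 2))⁻¹ •
    (dd ε 1 1 * da ε 0 0 - (qq ^ ε) • (da ε 0 0 * dd ε 1 1)) := by
  have hne : (qq : K) ^ ε * (1 - qq ^ 2) ≠ 0 := mul_ne_zero (qq_pow_ne_zero ε) one_sub_qq_sq_ne
  rw [← DL7 ε, smul_smul, inv_mul_cancel₀ hne, one_smul]

end DRels
section PRels
variable (ε : ℕ)

lemma prel1 : pa ε 0 1 * pa ε 0 0 - pa ε 0 0 * pa ε 0 1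
    = (-((qq ^ 2)⁻¹ - 1)) • (pa ε 0 1 * pa ε 1 1) := by
  simpa [pa, map_sub, _root_.map_mul, _root_.map_smul] using
    RingQuot.mkAlgHom_rel K (DpRel.ra (ε := ε) ReRel.r1)

lemma prel4 : pa ε 1 1 * pa ε 0 1 = (qq ^ 2) • (pa ε 0 1 * pa ε 1 1) := by
  simpa [pa, _root_.map_mul, _root_.map_smul] using
    RingQuot.mkAlgHom_rel K (DpRel.ra (ε := ε) ReRel.r4)

lemma prel5 : pa ε 1 0 * pa ε 0 1 - pa ε 0 1 * pa ε 1 0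
    = (-((qq ^ 2)⁻¹ - 1)) • (pa ε 0 0 * pa ε 1 1 - pa ε 1 1 * pa ε 1 1) := by
  simpa [pa, map_sub, _root_.map_mul, _root_.map_smul] using
    RingQuot.mkAlgHom_rel K (DpRel.ra (ε := ε) ReRel.r5)

lemma PL1 : pa ε 0 1 * pa ε 1 1 = (qq ^ 2)⁻¹ • (pa ε 1 1 * pa ε 0 1) := by
  rw [prel4, smul_smul, inv_mul_cancel₀ qq_sq_ne_zero, one_smul]

lemma PL2 : pa ε 0 1 * pa ε 0 0
    = (pa ε 0 0 + (-((qq ^ 2)⁻¹ - 1) * (qq ^ 2)⁻¹) • pa ε 1 1) * pa ε 0 1 := by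
  have h3 : pa ε 0 1 * pa ε 0 0
      = pa ε 0 0 * pa ε 0 1 + (-((qq ^ 2)⁻¹ - 1)) • (pa ε 0 1 * pa ε 1 1) := by
    rw [← prel1]; abel
  rw [PL1, smul_smul] at h3
  rw [h3, add_mul, smul_mul_assoc]

lemma PL3 : pa ε 0 1 * pa ε 1 0 = pa ε 1 0 * pa ε 0 1
    - (-((qq ^ 2)⁻¹ - 1)) • (pa ε 0 0 * pa ε 1 1 - pa ε 1 1 * pa ε 1 1) := by
  rw [← prel5]; abel

lemma pd_ne : ((qq : K)⁻¹) ^ ε * qq ≠ 0 :=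
  mul_ne_zero (pow_ne_zero ε (inv_ne_zero qq_ne_zero)) qq_ne_zero

lemma pcross_1 : pf ε 0 0 * pa ε 0 1 = (qq⁻¹ ^ ε) • (qq • (pa ε 0 1 * pf ε 0 0)) := by
  have h := RingQuot.mkAlgHom_rel K
    (DpRel.cross (ε := ε) ((0:Fin 2),(0:Fin 2)) ((1:Fin 2),(0:Fin 2)))
  rw [Plhs_1, Prhs_1] at h
  simpa [pa, pf, _root_.map_mul, _root_.map_smul] using h

lemma pcross_2 : pf ε 0 1 * pa ε 0 1 = (qq⁻¹ ^ ε) • (qq • (pa ε 0 1 * pf ε 0 1)) := by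
  have h := RingQuot.mkAlgHom_rel K
    (DpRel.cross (ε := ε) ((0:Fin 2),(0:Fin 2)) ((1:Fin 2),(1:Fin 2)))
  rw [Plhs_2, Prhs_2] at h
  simpa [pa, pf, _root_.map_mul, _root_.map_smul] using h

lemma pcross_3 : pf ε 1 0 * pa ε 0 1 = (qq⁻¹ ^ ε) • (qq • (pa ε 0 1 * pf ε 1 0)
    + (qq - qq⁻¹) • (pa ε 1 1 * pf ε 0 0)) := by
  have h := RingQuot.mkAlgHom_rel K
    (DpRel.cross (ε := ε) ((0:Fin 2),(1:Fin 2)) ((1:Fin 2),(0:Fin 2)))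
  rw [Plhs_3, Prhs_3] at h
  simpa [pa, pf, _root_.map_mul, _root_.map_smul, map_add] using h

lemma pcross_4 : pf ε 1 1 * pa ε 0 1 = (qq⁻¹ ^ ε) • (qq • (pa ε 0 1 * pf ε 1 1)
    + (qq - qq⁻¹) • (pa ε 1 1 * pf ε 0 1)) := by
  have h := RingQuot.mkAlgHom_rel K
    (DpRel.cross (ε := ε) ((0:Fin 2),(1:Fin 2)) ((1:Fin 2),(1:Fin 2)))
  rw [Plhs_4, Prhs_4] at h
  simpa [pa, pf, _root_.map_mul, _root_.map_smul, map_add] using h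

lemma PL4 : pa ε 0 1 * pf ε 0 0 = (qq⁻¹ ^ ε * qq)⁻¹ • (pf ε 0 0 * pa ε 0 1) := by
  have h2 := congrArg (fun z => ((qq⁻¹ ^ ε * qq : K))⁻¹ • z) (pcross_1 ε)
  simp only [smul_smul] at h2
  rw [inv_mul_cancel₀ (pd_ne ε), one_smul] at h2
  exact h2.symm

lemma PL5 : pa ε 0 1 * pf ε 0 1 = (qq⁻¹ ^ ε * qq)⁻¹ • (pf ε 0 1 * pa ε 0 1) := by
  have h2 := congrArg (fun z => ((qq⁻¹ ^ ε * qq : K))⁻¹ • z) (pcross_2 ε)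
  simp only [smul_smul] at h2
  rw [inv_mul_cancel₀ (pd_ne ε), one_smul] at h2
  exact h2.symm

lemma PL6 : (qq⁻¹ ^ ε * qq) • (pa ε 0 1 * pf ε 1 0)
    = pf ε 1 0 * pa ε 0 1 - (qq⁻¹ ^ ε * (qq - qq⁻¹)) • (pa ε 1 1 * pf ε 0 0) := by
  rw [pcross_3 ε, smul_add, smul_smul, smul_smul]
  abel

lemma PL6' : pa ε 0 1 * pf ε 1 0 = (qq⁻¹ ^ ε * qq)⁻¹ •
    (pf ε 1 0 * pa ε 0 1 - (qq⁻¹ ^ ε * (qq - qq⁻¹)) • (pa ε 1 1 * pf ε 0 0)) := by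
  rw [← PL6 ε, smul_smul, inv_mul_cancel₀ (pd_ne ε), one_smul]

lemma PL7 : (qq⁻¹ ^ ε * qq) • (pa ε 0 1 * pf ε 1 1)
    = pf ε 1 1 * pa ε 0 1 - (qq⁻¹ ^ ε * (qq - qq⁻¹)) • (pa ε 1 1 * pf ε 0 1) := by
  rw [pcross_4 ε, smul_add, smul_smul, smul_smul]
  abel

lemma PL7' : pa ε 0 1 * pf ε 1 1 = (qq⁻¹ ^ ε * qq)⁻¹ •
    (pf ε 1 1 * pa ε 0 1 - (qq⁻¹ ^ ε * (qq - qq⁻¹)) • (pa ε 1 1 * pf ε 0 1)) := by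
  rw [← PL7 ε, smul_smul, inv_mul_cancel₀ (pd_ne ε), one_smul]

end PRels
lemma oreD (ε : ℕ) :
    LeftOreCond ((Submonoid.powers (da ε 0 1) : Submonoid (DqM2 ε)) : Set (DqM2 ε)) := by
  set G : Set (DqM2 ε) := {da ε 0 0, da ε 1 1, da ε 0 1, dd ε 0 1, dd ε 1 1,
    da ε 0 0 * dd ε 0 1, da ε 0 0 * dd ε 1 1, da ε 1 0 * da ε 0 1} with hG
  have g1 : da ε 0 0 ∈ G := by left; rfl
  have g2 : da ε 1 1 ∈ G := by right; left; rfl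
  have g3 : da ε 0 1 ∈ G := by right; right; left; rfl
  have g4 : dd ε 0 1 ∈ G := by right; right; right; left; rfl
  have g5 : dd ε 1 1 ∈ G := by right; right; right; right; left; rfl
  have g6 : da ε 0 0 * dd ε 0 1 ∈ G := by right; right; right; right; right; left; rfl
  have g7 : da ε 0 0 * dd ε 1 1 ∈ G := by
    right; right; right; right; right; right; left; rfl
  have g8 : da ε 1 0 * da ε 0 1 ∈ G := by
    right; right; right; right; right; right; right; rfl
  have sub : ∀ x ∈ G, x ∈ Algebra.adjoin K G := fun x hx => Algebra.subset_adjoin hx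
  have mA00 := sub _ g1; have mA11 := sub _ g2; have mA01 := sub _ g3
  have mD01 := sub _ g4; have mD11 := sub _ g5
  have mAD01 := sub _ g6; have mAD11 := sub _ g7; have mAA := sub _ g8
  have mu1 : da ε 0 0 + (-((qq ^ 2)⁻¹ - 1) * (qq ^ 2)⁻¹) • da ε 1 1 ∈ Algebra.adjoin K G :=
    add_mem mA00 (Subalgebra.smul_mem _ mA11 _)
  refine ore_of_adjoin (da ε 0 1) G
    (Set.range fun g : DGen => RingQuot.mkAlgHom K (DqRel ε) (FreeAlgebra.ι K g))
    (adjoin_top_quot _) mA01 ?_ ?_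
  · -- hcomm
    intro g hg
    simp only [hG, Set.mem_insert_iff, Set.mem_singleton_iff] at hg
    rcases hg with rfl | rfl | rfl | rfl | rfl | rfl | rfl | rfl
    · exact ⟨_, mu1, DL2 ε⟩
    · exact ⟨(qq ^ 2)⁻¹ • da ε 1 1, Subalgebra.smul_mem _ mA11 _,
        by rw [DL1, smul_mul_assoc]⟩
    · exact ⟨da ε 0 1, mA01, rfl⟩
    · exact ⟨((qq ^ ε * qq⁻¹)⁻¹ * qq) • dd ε 0 1, Subalgebra.smul_mem _ mD01 _,
        by rw [DL4, smul_mul_assoc]⟩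
    · exact ⟨(qq ^ ε)⁻¹ • dd ε 1 1, Subalgebra.smul_mem _ mD11 _,
        by rw [DL5, smul_mul_assoc]⟩
    · refine ⟨((qq ^ ε * qq⁻¹)⁻¹ * qq) •
        ((da ε 0 0 + (-((qq ^ 2)⁻¹ - 1) * (qq ^ 2)⁻¹) • da ε 1 1) * dd ε 0 1),
        Subalgebra.smul_mem _ (mul_mem mu1 mD01) _, ?_⟩
      rw [← mul_assoc, DL2, mul_assoc, DL4, mul_smul_comm, ← mul_assoc, ← smul_mul_assoc]
    · refine ⟨(qq ^ ε)⁻¹ •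
        ((da ε 0 0 + (-((qq ^ 2)⁻¹ - 1) * (qq ^ 2)⁻¹) • da ε 1 1) * dd ε 1 1),
        Subalgebra.smul_mem _ (mul_mem mu1 mD11) _, ?_⟩
      rw [← mul_assoc, DL2, mul_assoc, DL5, mul_smul_comm, ← mul_assoc, ← smul_mul_assoc]
    · refine ⟨da ε 1 0 * da ε 0 1 - (-((qq ^ 2)⁻¹ - 1)) •
        (da ε 0 0 * da ε 1 1 - da ε 1 1 * da ε 1 1),
        sub_mem mAA (Subalgebra.smul_mem _
          (sub_mem (mul_mem mA00 mA11) (mul_mem mA11 mA11)) _), ?_⟩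
      rw [← mul_assoc, DL3]
  · -- hcross
    rintro g ⟨(⟨i, j⟩ | ⟨i, j⟩), rfl⟩ <;> fin_cases i <;> fin_cases j
    · show da ε 0 1 * da ε 0 0 ∈ _
      rw [DL2]; exact mul_mem mu1 mA01
    · show da ε 0 1 * da ε 0 1 ∈ _
      exact mul_mem mA01 mA01
    · show da ε 0 1 * da ε 1 0 ∈ _
      rw [DL3]
      exact sub_mem mAA (Subalgebra.smul_mem _
        (sub_mem (mul_mem mA00 mA11) (mul_mem mA11 mA11)) _)
    · show da ε 0 1 * da ε 1 1 ∈ _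
      rw [DL1]; exact Subalgebra.smul_mem _ (mul_mem mA11 mA01) _
    · show da ε 0 1 * dd ε 0 0 ∈ _
      rw [DL6']
      exact Subalgebra.smul_mem _ (sub_mem (sub_mem
        (Subalgebra.smul_mem _ (mul_mem mD01 mA00) _)
        (Subalgebra.smul_mem _ mAD01 _))
        (Subalgebra.smul_mem _ (mul_mem mD11 mA01) _)) _
    · show da ε 0 1 * dd ε 0 1 ∈ _
      rw [DL4]; exact Subalgebra.smul_mem _ (mul_mem mD01 mA01) _
    · show da ε 0 1 * dd ε 1 0 ∈ _
      rw [DL7']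
      exact Subalgebra.smul_mem _ (sub_mem (mul_mem mD11 mA00)
        (Subalgebra.smul_mem _ mAD11 _)) _
    · show da ε 0 1 * dd ε 1 1 ∈ _
      rw [DL5]; exact Subalgebra.smul_mem _ (mul_mem mD11 mA01) _

lemma oreP (ε : ℕ) :
    LeftOreCond ((Submonoid.powers (pa ε 0 1) : Submonoid (DpM2 ε)) : Set (DpM2 ε)) := by
  set G : Set (DpM2 ε) := {pa ε 0 0, pa ε 1 1, pa ε 0 1, pf ε 0 0, pf ε 0 1,
    pa ε 1 1 * pf ε 0 0, pa ε 1 1 * pf ε 0 1, pa ε 1 0 * pa ε 0 1,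
    pf ε 1 0 * pa ε 0 1, pf ε 1 1 * pa ε 0 1} with hG
  have g1 : pa ε 0 0 ∈ G := by left; rfl
  have g2 : pa ε 1 1 ∈ G := by right; left; rfl
  have g3 : pa ε 0 1 ∈ G := by right; right; left; rfl
  have g4 : pf ε 0 0 ∈ G := by right; right; right; left; rfl
  have g5 : pf ε 0 1 ∈ G := by right; right; right; right; left; rfl
  have g6 : pa ε 1 1 * pf ε 0 0 ∈ G := by
    right; right; right; right; right; left; rfl
  have g7 : pa ε 1 1 * pf ε 0 1 ∈ G := by
    right; right; right; right; right; right; left; rfl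
  have g8 : pa ε 1 0 * pa ε 0 1 ∈ G := by
    right; right; right; right; right; right; right; left; rfl
  have g9 : pf ε 1 0 * pa ε 0 1 ∈ G := by
    right; right; right; right; right; right; right; right; left; rfl
  have g10 : pf ε 1 1 * pa ε 0 1 ∈ G := by
    right; right; right; right; right; right; right; right; right; rfl
  have sub : ∀ x ∈ G, x ∈ Algebra.adjoin K G := fun x hx => Algebra.subset_adjoin hx
  have mA00 := sub _ g1; have mA11 := sub _ g2; have mA01 := sub _ g3
  have mF00 := sub _ g4; have mF01 := sub _ g5
  have mAF0 := sub _ g6; have mAF1 := sub _ g7; have mAA := sub _ g8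
  have mFA0 := sub _ g9; have mFA1 := sub _ g10
  have mu1 : pa ε 0 0 + (-((qq ^ 2)⁻¹ - 1) * (qq ^ 2)⁻¹) • pa ε 1 1 ∈ Algebra.adjoin K G :=
    add_mem mA00 (Subalgebra.smul_mem _ mA11 _)
  refine ore_of_adjoin (pa ε 0 1) G
    (Set.range fun g : PGen => RingQuot.mkAlgHom K (DpRel ε) (FreeAlgebra.ι K g))
    (adjoin_top_quot _) mA01 ?_ ?_
  · -- hcomm
    intro g hg
    simp only [hG, Set.mem_insert_iff, Set.mem_singleton_iff] at hg
    rcases hg with rfl | rfl | rfl | rfl | rfl | rfl | rfl | rfl | rfl | rfl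
    · exact ⟨_, mu1, PL2 ε⟩
    · exact ⟨(qq ^ 2)⁻¹ • pa ε 1 1, Subalgebra.smul_mem _ mA11 _,
        by rw [PL1, smul_mul_assoc]⟩
    · exact ⟨pa ε 0 1, mA01, rfl⟩
    · exact ⟨(qq⁻¹ ^ ε * qq)⁻¹ • pf ε 0 0, Subalgebra.smul_mem _ mF00 _,
        by rw [PL4, smul_mul_assoc]⟩
    · exact ⟨(qq⁻¹ ^ ε * qq)⁻¹ • pf ε 0 1, Subalgebra.smul_mem _ mF01 _,
        by rw [PL5, smul_mul_assoc]⟩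
    · refine ⟨((qq ^ 2)⁻¹ * (qq⁻¹ ^ ε * qq)⁻¹) • (pa ε 1 1 * pf ε 0 0),
        Subalgebra.smul_mem _ mAF0 _, ?_⟩
      rw [← mul_assoc, PL1, smul_mul_assoc, mul_assoc, PL4, mul_smul_comm, smul_smul,
        ← mul_assoc, ← smul_mul_assoc]
    · refine ⟨((qq ^ 2)⁻¹ * (qq⁻¹ ^ ε * qq)⁻¹) • (pa ε 1 1 * pf ε 0 1),
        Subalgebra.smul_mem _ mAF1 _, ?_⟩
      rw [← mul_assoc, PL1, smul_mul_assoc, mul_assoc, PL5, mul_smul_comm, smul_smul,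
        ← mul_assoc, ← smul_mul_assoc]
    · refine ⟨pa ε 1 0 * pa ε 0 1 - (-((qq ^ 2)⁻¹ - 1)) •
        (pa ε 0 0 * pa ε 1 1 - pa ε 1 1 * pa ε 1 1),
        sub_mem mAA (Subalgebra.smul_mem _
          (sub_mem (mul_mem mA00 mA11) (mul_mem mA11 mA11)) _), ?_⟩
      rw [← mul_assoc, PL3]
    · refine ⟨(qq⁻¹ ^ ε * qq)⁻¹ •
        (pf ε 1 0 * pa ε 0 1 - (qq⁻¹ ^ ε * (qq - qq⁻¹)) • (pa ε 1 1 * pf ε 0 0)),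
        Subalgebra.smul_mem _ (sub_mem mFA0 (Subalgebra.smul_mem _ mAF0 _)) _, ?_⟩
      rw [← mul_assoc, PL6', smul_mul_assoc]
    · refine ⟨(qq⁻¹ ^ ε * qq)⁻¹ •
        (pf ε 1 1 * pa ε 0 1 - (qq⁻¹ ^ ε * (qq - qq⁻¹)) • (pa ε 1 1 * pf ε 0 1)),
        Subalgebra.smul_mem _ (sub_mem mFA1 (Subalgebra.smul_mem _ mAF1 _)) _, ?_⟩
      rw [← mul_assoc, PL7', smul_mul_assoc]
  · -- hcross
    rintro g ⟨(⟨i, j⟩ | ⟨i, j⟩), rfl⟩ <;> fin_cases i <;> fin_cases j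
    · show pa ε 0 1 * pa ε 0 0 ∈ _
      rw [PL2]; exact mul_mem mu1 mA01
    · show pa ε 0 1 * pa ε 0 1 ∈ _
      exact mul_mem mA01 mA01
    · show pa ε 0 1 * pa ε 1 0 ∈ _
      rw [PL3]
      exact sub_mem mAA (Subalgebra.smul_mem _
        (sub_mem (mul_mem mA00 mA11) (mul_mem mA11 mA11)) _)
    · show pa ε 0 1 * pa ε 1 1 ∈ _
      rw [PL1]; exact Subalgebra.smul_mem _ (mul_mem mA11 mA01) _
    · show pa ε 0 1 * pf ε 0 0 ∈ _
      rw [PL4]; exact Subalgebra.smul_mem _ (mul_mem mF00 mA01) _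
    · show pa ε 0 1 * pf ε 0 1 ∈ _
      rw [PL5]; exact Subalgebra.smul_mem _ (mul_mem mF01 mA01) _
    · show pa ε 0 1 * pf ε 1 0 ∈ _
      rw [PL6']
      exact Subalgebra.smul_mem _ (sub_mem mFA0 (Subalgebra.smul_mem _ mAF0 _)) _
    · show pa ε 0 1 * pf ε 1 1 ∈ _
      rw [PL7']
      exact Subalgebra.smul_mem _ (sub_mem mFA1 (Subalgebra.smul_mem _ mAF1 _)) _

/-- For `ε ∈ {0,1}`, the multiplicative submonoid `{ a₁₂ⁿ : n ∈ ℕ }` satisfies the left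
Ore condition both in `D_q(Mat_2^ε)` and in `D'_q(Mat_2^ε)`. -/
theorem a12_powers_ore :
    ∀ ε : ℕ, ε = 0 ∨ ε = 1 →
      LeftOreCond ((Submonoid.powers (da ε 0 1) : Submonoid (DqM2 ε)) : Set (DqM2 ε)) ∧
      LeftOreCond ((Submonoid.powers (pa ε 0 1) : Submonoid (DpM2 ε)) : Set (DpM2 ε)) := by
  intro ε _
  exact ⟨oreD ε, oreP ε⟩
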